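/- arXiv:1611.07820 — 4 statements merged into one kernel-verified Lean document; each statement's English description precedes it below -/
import Mathlib

section
/- Let q(m,n) := m² + mn + n² and let F : ℝ → ℝ be such that the family (m,n) ↦ (m²+n²)² · F(q(m,n)) is absolutely summable over ℤ²∖{(0,0)}. Then: (i) ∑_{(m,n)≠(0,0)} mn · F(q(m,n)) = −(1/2) ∑_{(m,n)≠(0,0)} n² · F(q(m,n)); (ii) ∑_{(m,n)≠(0,0)} m n³ · F(q(m,n)) = −(1/2) ∑_{(m,n)≠(0,0)} n⁴ · F(q(m,n)); (iii) ∑_{(m,n)≠(0,0)} m²n² · F(q(m,n)) = (1/2) ∑_{(m,n)≠(0,0)} n⁴ · F(q(m,n)). -/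
open Real

noncomputable section

/-- The triangular quadratic form `q(m,n) = m² + mn + n²`, as a real number. -/
def qtri (p : ℤ × ℤ) : ℝ :=
  (p.1 : ℝ) ^ 2 + (p.1 : ℝ) * (p.2 : ℝ) + (p.2 : ℝ) ^ 2

/-!
Both the shear `(m, n) ↦ (-m - n, n)` and the swap `(m, n) ↦ (n, m)` permute `ℤ² ∖ {0}` and
preserve `q`, so a lattice sum weighted by `F ∘ q` is unchanged when the monomial in front of
the weight is composed with either of them. For `m nᵏ` the shear gives `-m nᵏ - nᵏ⁺¹`, whence
`∑ m nᵏ = -½ ∑ nᵏ⁺¹`; this is (i) and (ii). For `m³ n` it gives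
`-(m³ n + 3 m² n² + 3 m n³ + n⁴)`, and the swap and (ii) identify `∑ m³ n = ∑ m n³ = -½ ∑ n⁴`,
which leaves (iii). The growth condition makes every monomial of degree at most four summable
against the weight.
-/

namespace TriangularLattice

def shear : Equiv.Perm (ℤ × ℤ) :=
  Function.Involutive.toPerm (fun p => (-p.1 - p.2, p.2)) fun p => by simp

lemma shear_apply (p : ℤ × ℤ) : shear p = (-p.1 - p.2, p.2) := rfl

lemma qtri_shear (p : ℤ × ℤ) : qtri (shear p) = qtri p := by
  simp only [qtri, shear_apply]
  push_cast
  ring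

lemma qtri_swap (p : ℤ × ℤ) : qtri p.swap = qtri p := by
  simp only [qtri, Prod.fst_swap, Prod.snd_swap]
  ring

lemma tsum_ne_zero_comp_equiv {α β : Type*} [Zero α] [AddCommMonoid β] [TopologicalSpace β]
    (e : α ≃ α) (he : e 0 = 0) (f : α → β) :
    ∑' p : {p : α // p ≠ 0}, f (e p) = ∑' p : {p : α // p ≠ 0}, f p :=
  (e.subtypeEquiv fun _ => (e.injective.ne_iff' he).symm).tsum_eq fun p => f p.1

lemma one_le_sq_add_sq {p : ℤ × ℤ} (hp : p ≠ 0) : 1 ≤ (p.1 : ℝ) ^ 2 + (p.2 : ℝ) ^ 2 := by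
  have hpos : 0 < p.1 ^ 2 + p.2 ^ 2 := by
    rcases ne_or_eq p.1 0 with h | h
    · positivity
    · have : p.2 ≠ 0 := fun h' => hp (Prod.ext h h')
      positivity
  exact_mod_cast hpos

lemma pow_abs_mul_pow_abs_le {a b : ℝ} (hab : 1 ≤ a ^ 2 + b ^ 2) {i j : ℕ} (hij : i + j ≤ 4) :
    |a| ^ i * |b| ^ j ≤ (a ^ 2 + b ^ 2) ^ 2 := by
  set r := √(a ^ 2 + b ^ 2)
  calc |a| ^ i * |b| ^ j ≤ r ^ i * r ^ j := by
        gcongr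
        · exact abs_le_sqrt (by nlinarith)
        · exact abs_le_sqrt (by nlinarith)
    _ = r ^ (i + j) := (pow_add r i j).symm
    _ ≤ r ^ (2 * 2) := pow_le_pow_right₀ (one_le_sqrt.mpr hab) hij
    _ = (a ^ 2 + b ^ 2) ^ 2 := by rw [pow_mul, sq_sqrt (by positivity)]

section

variable {w : ℤ × ℤ → ℝ}

lemma summable_pow_mul_pow_mul
    (hsum : Summable fun p : {p : ℤ × ℤ // p ≠ 0} =>
      |((p.1.1 : ℝ) ^ 2 + (p.1.2 : ℝ) ^ 2) ^ 2 * w p.1|)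
    {i j : ℕ} (hij : i + j ≤ 4) :
    Summable fun p : {p : ℤ × ℤ // p ≠ 0} => (p.1.1 : ℝ) ^ i * (p.1.2 : ℝ) ^ j * w p.1 := by
  refine hsum.of_norm_bounded fun p => ?_
  rw [norm_eq_abs, abs_mul, abs_mul, abs_mul, abs_pow, abs_pow,
    abs_of_nonneg (by positivity : (0 : ℝ) ≤ ((p.1.1 : ℝ) ^ 2 + (p.1.2 : ℝ) ^ 2) ^ 2)]
  gcongr
  exact pow_abs_mul_pow_abs_le (one_le_sq_add_sq p.2) hij

theorem tsum_mul_pow_mul_eq (hw : ∀ p, w (shear p) = w p)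
    (hsum : Summable fun p : {p : ℤ × ℤ // p ≠ 0} =>
      |((p.1.1 : ℝ) ^ 2 + (p.1.2 : ℝ) ^ 2) ^ 2 * w p.1|)
    {k : ℕ} (hk : k ≤ 3) :
    ∑' p : {p : ℤ × ℤ // p ≠ 0}, (p.1.1 : ℝ) * (p.1.2 : ℝ) ^ k * w p.1 =
      -(1 / 2) * ∑' p : {p : ℤ × ℤ // p ≠ 0}, (p.1.2 : ℝ) ^ (k + 1) * w p.1 := by
  have h₁ : Summable fun p : {p : ℤ × ℤ // p ≠ 0} => (p.1.1 : ℝ) * (p.1.2 : ℝ) ^ k * w p.1 := by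
    simpa using summable_pow_mul_pow_mul hsum (i := 1) (j := k) (by omega)
  have h₂ : Summable fun p : {p : ℤ × ℤ // p ≠ 0} => (p.1.2 : ℝ) ^ (k + 1) * w p.1 := by
    simpa using summable_pow_mul_pow_mul hsum (i := 0) (j := k + 1) (by omega)
  have key : ∑' p : {p : ℤ × ℤ // p ≠ 0}, (p.1.1 : ℝ) * (p.1.2 : ℝ) ^ k * w p.1 =
      -∑' p : {p : ℤ × ℤ // p ≠ 0}, (p.1.1 : ℝ) * (p.1.2 : ℝ) ^ k * w p.1 -
        ∑' p : {p : ℤ × ℤ // p ≠ 0}, (p.1.2 : ℝ) ^ (k + 1) * w p.1 := by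
    rw [← tsum_neg, ← h₁.neg.tsum_sub h₂,
      ← tsum_ne_zero_comp_equiv shear rfl fun p => (p.1 : ℝ) * (p.2 : ℝ) ^ k * w p]
    refine tsum_congr fun p => ?_
    rw [hw, shear_apply]
    push_cast
    ring
  linarith

theorem tsum_sq_mul_sq_mul_eq (hw : ∀ p, w (shear p) = w p) (hw' : ∀ p, w p.swap = w p)
    (hsum : Summable fun p : {p : ℤ × ℤ // p ≠ 0} =>
      |((p.1.1 : ℝ) ^ 2 + (p.1.2 : ℝ) ^ 2) ^ 2 * w p.1|) :
    ∑' p : {p : ℤ × ℤ // p ≠ 0}, (p.1.1 : ℝ) ^ 2 * (p.1.2 : ℝ) ^ 2 * w p.1 =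
      (1 / 2) * ∑' p : {p : ℤ × ℤ // p ≠ 0}, (p.1.2 : ℝ) ^ 4 * w p.1 := by
  have h₁ : Summable fun p : {p : ℤ × ℤ // p ≠ 0} => (p.1.1 : ℝ) ^ 3 * (p.1.2 : ℝ) * w p.1 := by
    simpa using summable_pow_mul_pow_mul hsum (i := 3) (j := 1) (by omega)
  have h₂ := summable_pow_mul_pow_mul hsum (i := 2) (j := 2) (by omega)
  have h₃ : Summable fun p : {p : ℤ × ℤ // p ≠ 0} => (p.1.1 : ℝ) * (p.1.2 : ℝ) ^ 3 * w p.1 := by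
    simpa using summable_pow_mul_pow_mul hsum (i := 1) (j := 3) (by omega)
  have h₄ : Summable fun p : {p : ℤ × ℤ // p ≠ 0} => (p.1.2 : ℝ) ^ 4 * w p.1 := by
    simpa using summable_pow_mul_pow_mul hsum (i := 0) (j := 4) (by omega)
  have hshear : ∑' p : {p : ℤ × ℤ // p ≠ 0}, (p.1.1 : ℝ) ^ 3 * (p.1.2 : ℝ) * w p.1 =
      -(∑' p : {p : ℤ × ℤ // p ≠ 0}, (p.1.1 : ℝ) ^ 3 * (p.1.2 : ℝ) * w p.1 +
        3 * ∑' p : {p : ℤ × ℤ // p ≠ 0}, (p.1.1 : ℝ) ^ 2 * (p.1.2 : ℝ) ^ 2 * w p.1 +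
        3 * ∑' p : {p : ℤ × ℤ // p ≠ 0}, (p.1.1 : ℝ) * (p.1.2 : ℝ) ^ 3 * w p.1 +
        ∑' p : {p : ℤ × ℤ // p ≠ 0}, (p.1.2 : ℝ) ^ 4 * w p.1) := by
    rw [← tsum_mul_left, ← tsum_mul_left, ← h₁.tsum_add (h₂.mul_left 3),
      ← (h₁.add (h₂.mul_left 3)).tsum_add (h₃.mul_left 3),
      ← ((h₁.add (h₂.mul_left 3)).add (h₃.mul_left 3)).tsum_add h₄, ← tsum_neg,
      ← tsum_ne_zero_comp_equiv shear rfl fun p => (p.1 : ℝ) ^ 3 * (p.2 : ℝ) * w p]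
    refine tsum_congr fun p => ?_
    rw [hw, shear_apply]
    push_cast
    ring
  have hswap : ∑' p : {p : ℤ × ℤ // p ≠ 0}, (p.1.1 : ℝ) ^ 3 * (p.1.2 : ℝ) * w p.1 =
      ∑' p : {p : ℤ × ℤ // p ≠ 0}, (p.1.1 : ℝ) * (p.1.2 : ℝ) ^ 3 * w p.1 := by
    rw [← tsum_ne_zero_comp_equiv (Equiv.prodComm ℤ ℤ) rfl
      fun p => (p.1 : ℝ) * (p.2 : ℝ) ^ 3 * w p]
    refine tsum_congr fun p => ?_
    rw [Equiv.prodComm_apply, hw', Prod.fst_swap, Prod.snd_swap]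
    ring
  have h_ii := tsum_mul_pow_mul_eq hw hsum (k := 3) (by omega)
  linarith

end

end TriangularLattice

open TriangularLattice

/-- Lattice-sum identities for the triangular quadratic form `q(m,n) = m²+mn+n²`. -/
theorem triangular_lattice_sum_identities (F : ℝ → ℝ)
    (hsum : Summable (fun p : {p : ℤ × ℤ // p ≠ 0} =>
      |((p.1.1 : ℝ) ^ 2 + (p.1.2 : ℝ) ^ 2) ^ 2 * F (qtri p.1)|)) :
    (∑' p : {p : ℤ × ℤ // p ≠ 0}, (p.1.1 : ℝ) * (p.1.2 : ℝ) * F (qtri p.1)) =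
      -(1 / 2) * ∑' p : {p : ℤ × ℤ // p ≠ 0}, (p.1.2 : ℝ) ^ 2 * F (qtri p.1) ∧
    (∑' p : {p : ℤ × ℤ // p ≠ 0}, (p.1.1 : ℝ) * (p.1.2 : ℝ) ^ 3 * F (qtri p.1)) =
      -(1 / 2) * ∑' p : {p : ℤ × ℤ // p ≠ 0}, (p.1.2 : ℝ) ^ 4 * F (qtri p.1) ∧
    (∑' p : {p : ℤ × ℤ // p ≠ 0}, (p.1.1 : ℝ) ^ 2 * (p.1.2 : ℝ) ^ 2 * F (qtri p.1)) =
      (1 / 2) * ∑' p : {p : ℤ × ℤ // p ≠ 0}, (p.1.2 : ℝ) ^ 4 * F (qtri p.1) := by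
  have hshear : ∀ p, F (qtri (shear p)) = F (qtri p) := fun p => by rw [qtri_shear]
  have hswap : ∀ p : ℤ × ℤ, F (qtri p.swap) = F (qtri p) := fun p => by rw [qtri_swap]
  have h_i := tsum_mul_pow_mul_eq (w := fun p => F (qtri p)) hshear hsum (k := 1) (by omega)
  simp only [pow_one, one_add_one_eq_two] at h_i
  exact ⟨h_i, tsum_mul_pow_mul_eq (w := fun p => F (qtri p)) hshear hsum (k := 3) (by omega),
    tsum_sq_mul_sq_mul_eq (w := fun p => F (qtri p)) hshear hswap hsum⟩
end
end

section
/- For every A > 0 and every f in the class F, the point (1/2, √3/2) is a critical point of (x,y) ↦ E_f(x,y,A): both partial derivatives vanish there. In particular, ∑_{(m,n)∈ℤ²∖{(0,0)}} (mn + n²/2) · f'((2A/√3)(m² + mn + n²)) = 0. -/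
open Real Filter

noncomputable section

def ClassF (f : ℝ → ℝ) : Prop :=
  ContDiffOn ℝ 2 f (Set.Ioi 0) ∧
  ∀ k : ℕ, k ≤ 2 → ∃ η : ℝ, 1 < η ∧
    (iteratedDeriv k f) =O[atTop] fun r : ℝ => r ^ (-(η + k))

def Qf (x y A : ℝ) (p : ℤ × ℤ) : ℝ :=
  A * (((p.1 : ℝ) + x * (p.2 : ℝ)) ^ 2 / y + y * (p.2 : ℝ) ^ 2)

def Ef (f : ℝ → ℝ) (x y A : ℝ) : ℝ :=
  ∑' p : {p : ℤ × ℤ // p ≠ 0}, f (Qf x y A p.1)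

/-!
At the triangular point `(1/2, √3/2)` the quadratic form is `(2A/√3)(m² + mn + n²)`, which is
invariant under the rotation `(m, n) ↦ (-m - n, m)` of order three. Both partial derivatives of
the energy, as well as the displayed sum, are lattice sums of `P(m, n) φ(m² + mn + n²)` with a
quadratic weight `P` whose sum over every orbit of the rotation vanishes; hence the whole series
vanishes. Term-by-term differentiation is justified because near that point the quadratic form is
comparable to `m² + n²`, so the decay of `f` and `f'` dominates the differentiated series by
`∑ (m² + n²)^(-η)` with `η > 1`.
-/

open Set

theorem tsum_eq_zero_of_sum_orbit_eq_zero {α M : Type*} [AddCommMonoid M] [TopologicalSpace M]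
    [ContinuousAdd M] [T2Space M] [IsAddTorsionFree M] (σ : Equiv.Perm α) {k : ℕ} (hk : k ≠ 0)
    {g : α → M} (hg : ∀ a, ∑ j ∈ Finset.range k, g ((σ ^ j) a) = 0) : ∑' a, g a = 0 := by
  by_cases hs : Summable g
  · refine (nsmul_eq_zero_iff_right hk).1 ?_
    calc k • ∑' a, g a = ∑ j ∈ Finset.range k, ∑' a, g ((σ ^ j) a) := by
          simp only [Equiv.tsum_eq, Finset.sum_const, Finset.card_range]
      _ = ∑' a, ∑ j ∈ Finset.range k, g ((σ ^ j) a) :=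
          (Summable.tsum_finsetSum fun j _ => (σ ^ j).summable_iff.2 hs).symm
      _ = 0 := by simp only [hg, tsum_zero]
  · exact tsum_eq_zero_of_not_summable hs

theorem exists_abs_le_mul_rpow_of_isBigO {g : ℝ → ℝ} {s δ : ℝ} (hδ : 0 < δ)
    (hg : ContinuousOn g (Ici δ)) (hO : g =O[atTop] fun r => r ^ (-s)) :
    ∃ C, ∀ r, δ ≤ r → |g r| ≤ C * r ^ (-s) := by
  obtain ⟨c, hc⟩ := hO.bound
  obtain ⟨R, hR⟩ := eventually_atTop.1 hc
  have hpos : ∀ r, δ ≤ r → 0 < r ^ (-s) := fun r hr => rpow_pos_of_pos (hδ.trans_le hr) _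
  have hcont : ContinuousOn (fun r => g r / r ^ (-s)) (Icc δ R) :=
    (hg.mono Icc_subset_Ici_self).div
      (continuousOn_id.rpow_const fun r hr => Or.inl (hδ.trans_le hr.1).ne')
      fun r hr => (hpos r hr.1).ne'
  obtain ⟨M, hM⟩ := isCompact_Icc.exists_bound_of_continuousOn hcont
  refine ⟨max c M, fun r hr => ?_⟩
  have hr' := hpos r hr
  rcases le_or_gt R r with hRr | hrR
  · have h := hR r hRr
    rw [norm_eq_abs, norm_eq_abs, abs_of_pos hr'] at h
    exact h.trans (mul_le_mul_of_nonneg_right (le_max_left _ _) hr'.le)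
  · have h := hM r ⟨hr, hrR.le⟩
    rw [norm_div, norm_eq_abs, norm_eq_abs, abs_of_pos hr', div_le_iff₀ hr'] at h
    exact h.trans (mul_le_mul_of_nonneg_right (le_max_right _ _) hr'.le)

theorem abs_le_of_forall_abs_le_rpow {g : ℝ → ℝ} {C s c N x : ℝ} (hc : 0 < c) (hs : 0 ≤ s)
    (hg : ∀ r, c ≤ r → |g r| ≤ C * r ^ (-s)) (hN : 1 ≤ N) (hx : c * N ≤ x) :
    |g x| ≤ C * c ^ (-s) * N ^ (-s) := by
  have hC : 0 ≤ C :=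
    nonneg_of_mul_nonneg_left ((abs_nonneg _).trans (hg c le_rfl)) (rpow_pos_of_pos hc _)
  have hN0 : 0 < N := one_pos.trans_le hN
  calc |g x| ≤ C * x ^ (-s) := hg x (le_mul_of_one_le_right hc.le hN |>.trans hx)
    _ ≤ C * (c * N) ^ (-s) :=
        mul_le_mul_of_nonneg_left (rpow_le_rpow_of_nonpos (by positivity) hx (neg_nonpos.2 hs)) hC
    _ = C * c ^ (-s) * N ^ (-s) := by rw [mul_rpow hc.le hN0.le, mul_assoc]

namespace ClassF

variable {f : ℝ → ℝ}

theorem hasDerivAt (hf : ClassF f) {r : ℝ} (hr : 0 < r) : HasDerivAt f (deriv f r) r :=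
  ((hf.1.contDiffAt (Ioi_mem_nhds hr)).differentiableAt (by norm_num)).hasDerivAt

theorem exists_abs_le (hf : ClassF f) {δ : ℝ} (hδ : 0 < δ) :
    ∃ η : ℝ, 1 < η ∧ ∃ C, ∀ r, δ ≤ r → |f r| ≤ C * r ^ (-η) := by
  obtain ⟨η, hη, hO⟩ := hf.2 0 (by norm_num)
  refine ⟨η, hη, exists_abs_le_mul_rpow_of_isBigO hδ ?_ ?_⟩
  · exact hf.1.continuousOn.mono fun r hr => hδ.trans_le hr
  · simpa only [iteratedDeriv_zero, CharP.cast_eq_zero, add_zero] using hO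

theorem exists_abs_deriv_le (hf : ClassF f) {δ : ℝ} (hδ : 0 < δ) :
    ∃ η : ℝ, 1 < η ∧ ∃ C, ∀ r, δ ≤ r → |deriv f r| ≤ C * r ^ (-(η + 1)) := by
  obtain ⟨η, hη, hO⟩ := hf.2 1 (by norm_num)
  refine ⟨η, hη, exists_abs_le_mul_rpow_of_isBigO hδ ?_ ?_⟩
  · exact (hf.1.continuousOn_deriv_of_isOpen isOpen_Ioi (by norm_num)).mono
      fun r hr => hδ.trans_le hr
  · simpa only [iteratedDeriv_one, Nat.cast_one] using hO

end ClassF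

theorem hasDerivAt_tsum_comp_of_le {ι : Type*} {f : ℝ → ℝ} (hf : ClassF f) {N : ι → ℝ}
    (hN : ∀ i, 1 ≤ N i) (hNsum : ∀ η : ℝ, 1 < η → Summable fun i => N i ^ (-η))
    {U : Set ℝ} (hU : IsOpen U) (hU' : IsPreconnected U) {Q Q' : ι → ℝ → ℝ} {c K : ℝ}
    (hc : 0 < c) (hQ : ∀ i, ∀ t ∈ U, HasDerivAt (Q i) (Q' i t) t)
    (hQ_ge : ∀ i, ∀ t ∈ U, c * N i ≤ Q i t) (hQ'_le : ∀ i, ∀ t ∈ U, |Q' i t| ≤ K * N i)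
    {t₀ : ℝ} (ht₀ : t₀ ∈ U) :
    HasDerivAt (fun t => ∑' i, f (Q i t)) (∑' i, deriv f (Q i t₀) * Q' i t₀) t₀ := by
  obtain ⟨η₀, hη₀, C₀, hC₀⟩ := hf.exists_abs_le hc
  obtain ⟨η₁, hη₁, C₁, hC₁⟩ := hf.exists_abs_deriv_le hc
  have hQ_pos : ∀ i, ∀ t ∈ U, 0 < Q i t := fun i t ht =>
    (mul_pos hc (one_pos.trans_le (hN i))).trans_le (hQ_ge i t ht)
  refine hasDerivAt_tsum_of_isPreconnected ((hNsum η₁ hη₁).mul_left (C₁ * c ^ (-(η₁ + 1)) * K))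
    hU hU' (fun i t ht => (hf.hasDerivAt (hQ_pos i t ht)).comp t (hQ i t ht))
    (fun i t ht => ?_) ht₀ ?_ ht₀
  · have hN0 : 0 < N i := one_pos.trans_le (hN i)
    have hf' := abs_le_of_forall_abs_le_rpow hc (by linarith) hC₁ (hN i) (hQ_ge i t ht)
    rw [norm_mul, norm_eq_abs, norm_eq_abs]
    calc |deriv f (Q i t)| * |Q' i t|
        ≤ C₁ * c ^ (-(η₁ + 1)) * N i ^ (-(η₁ + 1)) * (K * N i) :=
          mul_le_mul hf' (hQ'_le i t ht) (abs_nonneg _) ((abs_nonneg _).trans hf')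
      _ = C₁ * c ^ (-(η₁ + 1)) * K * N i ^ (-η₁) := by
          rw [neg_add, rpow_add hN0, rpow_neg_one]
          field_simp
  · refine .of_norm_bounded ((hNsum η₀ hη₀).mul_left (C₀ * c ^ (-η₀))) fun i => ?_
    exact abs_le_of_forall_abs_le_rpow (g := f) hc (by linarith) hC₀ (hN i) (hQ_ge i t₀ ht₀)

def latticeNormSq (p : ℤ × ℤ) : ℝ := (p.1 : ℝ) ^ 2 + (p.2 : ℝ) ^ 2

theorem one_le_latticeNormSq {p : ℤ × ℤ} (hp : p ≠ 0) : 1 ≤ latticeNormSq p := by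
  obtain ⟨m, n⟩ := p
  have h : (1 : ℤ) ≤ m ^ 2 + n ^ 2 := by
    rcases eq_or_ne m 0 with rfl | hm
    · have hn : n ≠ 0 := by rintro rfl; exact hp rfl
      nlinarith [Int.one_le_abs hn, sq_abs n]
    · nlinarith [sq_nonneg n, Int.one_le_abs hm, sq_abs m]
  unfold latticeNormSq
  exact_mod_cast h

theorem norm_sq_le_latticeNormSq (p : ℤ × ℤ) : ‖p‖ ^ 2 ≤ latticeNormSq p := by
  rw [latticeNormSq, Prod.norm_def, Int.norm_eq_abs, Int.norm_eq_abs]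
  rcases max_cases |(p.1 : ℝ)| |(p.2 : ℝ)| with ⟨h, _⟩ | ⟨h, _⟩ <;> rw [h, sq_abs]
  · exact le_add_of_nonneg_right (sq_nonneg _)
  · exact le_add_of_nonneg_left (sq_nonneg _)

theorem summable_norm_rpow_neg_of_two_lt {k : ℝ} (hk : 2 < k) :
    Summable fun p : ℤ × ℤ => ‖p‖ ^ (-k) := by
  simpa [Function.comp_def, EisensteinSeries.norm_eq_max_natAbs, Prod.norm_def, Int.norm_eq_abs]
    using ((finTwoArrowEquiv ℤ).symm.summable_iff).2 (EisensteinSeries.summable_one_div_norm_rpow hk)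

theorem summable_latticeNormSq_rpow_neg {η : ℝ} (hη : 1 < η) :
    Summable fun p : {p : ℤ × ℤ // p ≠ 0} => latticeNormSq p ^ (-η) := by
  refine .of_nonneg_of_le (fun p => rpow_nonneg (zero_le_one.trans (one_le_latticeNormSq p.2)) _)
    (fun p => ?_) ((summable_norm_rpow_neg_of_two_lt (k := 2 * η) (by linarith)).subtype _)
  have hp : 0 < ‖p.1‖ := norm_pos_iff.2 p.2
  calc latticeNormSq p ^ (-η) ≤ (‖p.1‖ ^ 2) ^ (-η) :=
        rpow_le_rpow_of_nonpos (by positivity) (norm_sq_le_latticeNormSq p) (by linarith)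
    _ = ‖p.1‖ ^ (-(2 * η)) := by
        rw [← rpow_natCast, ← rpow_mul hp.le]; norm_num

def dxQf (x y A : ℝ) (p : ℤ × ℤ) : ℝ := A * (2 * ((p.1 : ℝ) + x * p.2) * p.2 / y)

def dyQf (x y A : ℝ) (p : ℤ × ℤ) : ℝ := A * ((p.2 : ℝ) ^ 2 - ((p.1 : ℝ) + x * p.2) ^ 2 / y ^ 2)

theorem hasDerivAt_Qf_fst (x y A : ℝ) (p : ℤ × ℤ) :
    HasDerivAt (fun x => Qf x y A p) (dxQf x y A p) x := by
  have h : HasDerivAt (fun x : ℝ => (p.1 : ℝ) + x * p.2) (p.2 : ℝ) x := by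
    simpa using ((hasDerivAt_id x).mul_const (p.2 : ℝ)).const_add (p.1 : ℝ)
  exact ((((h.pow 2).div_const y).add_const _).const_mul A).congr_deriv (by simp only [dxQf]; ring)

theorem hasDerivAt_Qf_snd (x : ℝ) {y : ℝ} (hy : y ≠ 0) (A : ℝ) (p : ℤ × ℤ) :
    HasDerivAt (fun y => Qf x y A p) (dyQf x y A p) y := by
  have h : HasDerivAt (fun y : ℝ => ((p.1 : ℝ) + x * p.2) ^ 2 / y)
      (-(((p.1 : ℝ) + x * p.2) ^ 2 / y ^ 2)) y := by
    simpa [div_eq_mul_inv] using (hasDerivAt_inv hy).const_mul (((p.1 : ℝ) + x * p.2) ^ 2)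
  exact ((h.add ((hasDerivAt_id y).mul_const ((p.2 : ℝ) ^ 2))).const_mul A).congr_deriv
    (by simp only [dyQf]; ring)

theorem mul_latticeNormSq_le_Qf {x y A : ℝ} (hA : 0 ≤ A) (hx : |x| ≤ 1) (hy : 1 / 2 ≤ y)
    (hy' : y ≤ 2) (p : ℤ × ℤ) : A / 6 * latticeNormSq p ≤ Qf x y A p := by
  obtain ⟨m, n⟩ := p
  have hx2 : x ^ 2 ≤ 1 := by nlinarith [abs_le.1 hx]
  have hinv : (m + x * n : ℝ) ^ 2 / 2 ≤ (m + x * n) ^ 2 / y := by gcongr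
  have hlow : (m ^ 2 + n ^ 2 : ℝ) ≤ 3 * ((m + x * n) ^ 2 + n ^ 2) := by
    nlinarith [sq_nonneg ((m : ℝ) + 2 * x * n), mul_le_mul_of_nonneg_right hx2 (sq_nonneg (n : ℝ))]
  have hyn : (n : ℝ) ^ 2 / 2 ≤ y * n ^ 2 := by nlinarith [sq_nonneg (n : ℝ)]
  unfold Qf latticeNormSq
  nlinarith [mul_le_mul_of_nonneg_left (add_le_add hinv hyn) hA]

theorem abs_dxQf_le {x y A : ℝ} (hA : 0 ≤ A) (hx : |x| ≤ 1) (hy : 1 / 2 ≤ y) (p : ℤ × ℤ) :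
    |dxQf x y A p| ≤ 6 * A * latticeNormSq p := by
  obtain ⟨m, n⟩ := p
  have hy0 : 0 < y := by linarith
  have hx2 : x ^ 2 ≤ 1 := by nlinarith [abs_le.1 hx]
  have h : |2 * ((m : ℝ) + x * n) * n| ≤ 3 * latticeNormSq (m, n) := by
    rw [abs_le, latticeNormSq]
    constructor <;> nlinarith [sq_nonneg ((m : ℝ) + x * n + n), sq_nonneg ((m : ℝ) + x * n - n),
      sq_nonneg ((m : ℝ) - x * n), mul_le_mul_of_nonneg_right hx2 (sq_nonneg (n : ℝ))]
  rw [dxQf, abs_mul, abs_div, abs_of_nonneg hA, abs_of_pos hy0]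
  calc A * (|2 * ((m : ℝ) + x * n) * n| / y) ≤ A * (3 * latticeNormSq (m, n) / (1 / 2)) := by
        gcongr
        exact (abs_nonneg _).trans h
    _ = 6 * A * latticeNormSq (m, n) := by ring

theorem abs_dyQf_le {x y A : ℝ} (hA : 0 ≤ A) (hx : |x| ≤ 1) (hy : 1 / 2 ≤ y) (p : ℤ × ℤ) :
    |dyQf x y A p| ≤ 9 * A * latticeNormSq p := by
  obtain ⟨m, n⟩ := p
  have hy2 : 1 / 4 ≤ y ^ 2 := by nlinarith
  have hx2 : x ^ 2 ≤ 1 := by nlinarith [abs_le.1 hx]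
  have hu : ((m : ℝ) + x * n) ^ 2 / y ^ 2 ≤ 4 * ((m : ℝ) + x * n) ^ 2 := by
    rw [div_le_iff₀ (by linarith)]
    nlinarith [sq_nonneg ((m : ℝ) + x * n)]
  have hu0 : 0 ≤ ((m : ℝ) + x * n) ^ 2 / y ^ 2 := by positivity
  rw [dyQf, abs_mul, abs_of_nonneg hA, mul_right_comm, mul_comm _ A]
  refine mul_le_mul_of_nonneg_left ?_ hA
  rw [abs_le, latticeNormSq]
  constructor <;> nlinarith [sq_nonneg ((m : ℝ) - x * n), sq_nonneg (n : ℝ),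
    mul_le_mul_of_nonneg_right hx2 (sq_nonneg (n : ℝ))]

theorem hasDerivAt_Ef_fst {f : ℝ → ℝ} (hf : ClassF f) {x y A : ℝ} (hA : 0 < A)
    (hx : x ∈ Ioo (-1) 1) (hy : y ∈ Icc (1 / 2) 2) :
    HasDerivAt (fun t => Ef f t y A)
      (∑' p : {p : ℤ × ℤ // p ≠ 0}, deriv f (Qf x y A p) * dxQf x y A p) x :=
  hasDerivAt_tsum_comp_of_le hf (fun p => one_le_latticeNormSq p.2)
    (fun _ => summable_latticeNormSq_rpow_neg) isOpen_Ioo isPreconnected_Ioo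
    (by positivity : 0 < A / 6) (fun p t _ => hasDerivAt_Qf_fst t y A p)
    (fun p t ht => mul_latticeNormSq_le_Qf hA.le (abs_le.2 ⟨ht.1.le, ht.2.le⟩) hy.1 hy.2 p)
    (fun p t ht => abs_dxQf_le hA.le (abs_le.2 ⟨ht.1.le, ht.2.le⟩) hy.1 p) hx

theorem hasDerivAt_Ef_snd {f : ℝ → ℝ} (hf : ClassF f) {x y A : ℝ} (hA : 0 < A)
    (hx : |x| ≤ 1) (hy : y ∈ Ioo (1 / 2) 2) :
    HasDerivAt (fun t => Ef f x t A)
      (∑' p : {p : ℤ × ℤ // p ≠ 0}, deriv f (Qf x y A p) * dyQf x y A p) y :=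
  hasDerivAt_tsum_comp_of_le hf (fun p => one_le_latticeNormSq p.2)
    (fun _ => summable_latticeNormSq_rpow_neg) isOpen_Ioo isPreconnected_Ioo
    (by positivity : 0 < A / 6)
    (fun p t ht => hasDerivAt_Qf_snd x (by linarith [ht.1]) A p)
    (fun p t ht => mul_latticeNormSq_le_Qf hA.le hx ht.1.le ht.2.le p)
    (fun p t ht => abs_dyQf_le hA.le hx ht.1.le p) hy

/- In the basis `1, ω` of `ℤ[ω]`, `ω = e^{iπ/3}`, this is multiplication by `ω² = ω - 1`, and
`hexForm p = |p.1 + p.2 ω|²`. -/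
def rot120 : Equiv.Perm (ℤ × ℤ) where
  toFun p := (-p.1 - p.2, p.1)
  invFun p := (p.2, -p.1 - p.2)
  left_inv p := Prod.ext rfl (by dsimp only; ring)
  right_inv p := Prod.ext (by dsimp only; ring) rfl

def hexForm (p : ℤ × ℤ) : ℝ := (p.1 : ℝ) ^ 2 + p.1 * p.2 + (p.2 : ℝ) ^ 2

theorem rot120_apply (p : ℤ × ℤ) : rot120 p = (-p.1 - p.2, p.1) := rfl

theorem rot120_ne_zero_iff {p : ℤ × ℤ} : rot120 p ≠ 0 ↔ p ≠ 0 := by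
  obtain ⟨m, n⟩ := p
  simp only [rot120_apply, ne_eq, Prod.mk_eq_zero]
  omega

theorem hexForm_rot120 (p : ℤ × ℤ) : hexForm (rot120 p) = hexForm p := by
  simp only [hexForm, rot120_apply]
  push_cast
  ring

theorem tsum_mul_hexForm_eq_zero (φ : ℝ → ℝ) {P : ℤ × ℤ → ℝ}
    (hP : ∀ p, P p + P (rot120 p) + P (rot120 (rot120 p)) = 0) :
    ∑' p : {p : ℤ × ℤ // p ≠ 0}, P p * φ (hexForm p) = 0 := by
  refine tsum_eq_zero_of_sum_orbit_eq_zero (rot120.subtypePerm fun _ => rot120_ne_zero_iff)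
    three_ne_zero fun p => ?_
  simp only [Finset.sum_range_succ, Finset.sum_range_zero, pow_zero, pow_one, sq,
    Equiv.Perm.mul_apply, Equiv.Perm.one_apply, Equiv.Perm.subtypePerm_apply, hexForm_rot120]
  rw [zero_add, ← add_mul, ← add_mul, hP, zero_mul]

theorem Qf_triangular (A : ℝ) (p : ℤ × ℤ) :
    Qf (1 / 2) (√3 / 2) A p = 2 * A / √3 * hexForm p := by
  have h3 : √3 ^ 2 = 3 := sq_sqrt (by norm_num)
  have : √3 ≠ 0 := by positivity
  unfold Qf hexForm
  field_simp
  linear_combination (A * (p.2 : ℝ) ^ 2) * h3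

theorem tsum_deriv_Qf_triangular_mul_eq_zero (f : ℝ → ℝ) (A : ℝ) {P : ℤ × ℤ → ℝ}
    (hP : ∀ p, P p + P (rot120 p) + P (rot120 (rot120 p)) = 0) :
    ∑' p : {p : ℤ × ℤ // p ≠ 0}, deriv f (Qf (1 / 2) (√3 / 2) A p) * P p = 0 := by
  simp_rw [Qf_triangular, mul_comm (deriv f _)]
  exact tsum_mul_hexForm_eq_zero (fun r => deriv f (2 * A / √3 * r)) hP

/-- For every `A > 0` and `f ∈ F`, the triangular lattice point `(1/2, √3/2)` is a critical
point of `(x,y) ↦ E_f(x,y,A)`; in particular the corresponding lattice sum vanishes. -/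
theorem triangular_is_critical_point (f : ℝ → ℝ) (hf : ClassF f) (A : ℝ) (hA : 0 < A) :
    HasDerivAt (fun t => Ef f t (Real.sqrt 3 / 2) A) 0 (1 / 2 : ℝ) ∧
    HasDerivAt (fun t => Ef f (1 / 2) t A) 0 (Real.sqrt 3 / 2) ∧
    (∑' p : {p : ℤ × ℤ // p ≠ 0},
      ((p.1.1 : ℝ) * (p.1.2 : ℝ) + (p.1.2 : ℝ) ^ 2 / 2) *
        deriv f ((2 * A / Real.sqrt 3) *
          ((p.1.1 : ℝ) ^ 2 + (p.1.1 : ℝ) * (p.1.2 : ℝ) + (p.1.2 : ℝ) ^ 2))) = 0 := by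
  have h3 : √3 ^ 2 = 3 := sq_sqrt (by norm_num)
  have hy : √3 / 2 ∈ Ioo (1 / 2 : ℝ) 2 := by
    constructor <;> nlinarith [sqrt_nonneg 3]
  refine ⟨?_, ?_, ?_⟩
  · convert hasDerivAt_Ef_fst hf hA (x := 1 / 2) (by norm_num) (Ioo_subset_Icc_self hy)
    refine (tsum_deriv_Qf_triangular_mul_eq_zero f A fun p => ?_).symm
    simp only [dxQf, rot120_apply]
    push_cast
    ring
  · convert hasDerivAt_Ef_snd hf hA (x := 1 / 2) (by norm_num) hy
    refine (tsum_deriv_Qf_triangular_mul_eq_zero f A fun p => ?_).symm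
    simp only [dyQf, rot120_apply, div_pow, h3]
    push_cast
    ring
  · exact tsum_mul_hexForm_eq_zero (fun r => deriv f (2 * A / √3 * r))
      (P := fun p => (p.1 : ℝ) * p.2 + (p.2 : ℝ) ^ 2 / 2) fun p => by
      simp only [rot120_apply]
      push_cast
      ring
end
end

section
/- Let A > 0 and let f be in the class F. Then the second partial derivatives of (x,y) ↦ E_f(x,y,A) at the point (0,1) are: ∂²_{xx} E_f(0,1,A) = 2A ∑ n² f'(A[m²+n²]) + 4A² ∑ m²n² f''(A[m²+n²]); ∂²_{yy} E_f(0,1,A) = 2A ∑ m² f'(A[m²+n²]) + A² ∑ (n²−m²)² f''(A[m²+n²]); and the mixed derivative ∂²_{xy} E_f(0,1,A) = 0, where all sums are over (m,n) ∈ ℤ²∖{(0,0)}. In particular the Hessian of E_f(·,·,A) at (0,1) is diagonal. -/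
/-!
Near `(0, 1)` the quadratic form `Q_p` of a lattice point `p = (m, n) ≠ 0` is comparable to
`A (m² + n²)`, and its first and second derivatives are bounded by constant multiples of `Q_p`.
Since `|f⁽ᵏ⁾(r)| rᵏ = O(r^{-η})` with `η > 1`, every first and second partial derivative of
`f ∘ Q_p` is then bounded on a neighbourhood of `(0, 1)` by a constant times `(m² + n²)^{-η}`,
a summable majorant over `ℤ² \ {0}`. So `E_f` can be differentiated twice termwise, and the
termwise derivatives at `(0, 1)` give the formulas. The mixed derivative vanishes because
`(m, n) ↦ (-m, n)` shows that `E_f` is even in `x`, so `∂ₓE_f(0, y) = 0` for every `y`.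
-/

open Real Filter

noncomputable section

open Set Asymptotics Topology

theorem isBigO_principal_Ici_of_isBigO_atTop {g w : ℝ → ℝ} {b : ℝ}
    (hg : ContinuousOn g (Ici b)) (hw : ContinuousOn w (Ici b)) (hw₀ : ∀ r ∈ Ici b, w r ≠ 0)
    (h : g =O[atTop] w) : g =O[𝓟 (Ici b)] w := by
  obtain ⟨c, hc⟩ := h.bound
  obtain ⟨R, hR⟩ := eventually_atTop.1 hc
  have hIcc : Icc b R ⊆ Ici b := Icc_subset_Ici_self
  have hcompact : g =O[𝓟 (Icc b R)] w :=
    ((hg.mono hIcc).isBigO_principal isCompact_Icc (by norm_num : ‖(1 : ℝ)‖ ≠ 0)).trans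
      ((hw.mono hIcc).isBigO_rev_principal isCompact_Icc (fun r hr => hw₀ r (hIcc hr)) (1 : ℝ))
  have htail : g =O[𝓟 (Ici R)] w := isBigO_principal.2 ⟨c, hR⟩
  refine (hcompact.sup htail).mono ?_
  rw [sup_principal, principal_mono]
  intro r hr
  rcases le_total r R with h | h
  exacts [Or.inl ⟨hr, h⟩, Or.inr h]

theorem isBigO_iteratedDeriv_mul_pow_principal_Ici {f : ℝ → ℝ} {n : ℕ∞} {k : ℕ} {b η η' : ℝ}
    (hf : ContDiffOn ℝ n f (Ioi 0)) (hk : k ≤ n) (hb : 0 < b) (hη : η ≤ η')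
    (hO : iteratedDeriv k f =O[atTop] fun r => r ^ (-(η' + k))) :
    (fun r => iteratedDeriv k f r * r ^ k) =O[𝓟 (Ici b)] fun r => r ^ (-η) := by
  have hbIoi : Ici b ⊆ Ioi 0 := Ici_subset_Ioi.2 hb
  have hcont : ContinuousOn (iteratedDeriv k f) (Ioi 0) :=
    (hf.continuousOn_iteratedDerivWithin (by exact_mod_cast hk) isOpen_Ioi.uniqueDiffOn).congr
      (iteratedDerivWithin_of_isOpen isOpen_Ioi).symm
  refine isBigO_principal_Ici_of_isBigO_atTop ((hcont.mono hbIoi).mul (by fun_prop))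
    (continuousOn_id.rpow_const fun r hr => Or.inl (hbIoi hr).ne')
    (fun r hr => (rpow_pos_of_pos (hbIoi hr) _).ne') ?_
  refine (hO.mul (isBigO_refl (fun r : ℝ => r ^ k) atTop)).trans (IsBigO.of_bound 1 ?_)
  filter_upwards [eventually_ge_atTop 1] with r hr
  have hr₀ : 0 < r := one_pos.trans_le hr
  rw [← rpow_natCast, ← rpow_add hr₀, neg_add, neg_add_cancel_right, one_mul,
    norm_of_nonneg (rpow_nonneg hr₀.le _), norm_of_nonneg (rpow_nonneg hr₀.le _)]
  exact rpow_le_rpow_of_exponent_le hr (neg_le_neg hη)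

theorem ClassF.exists_decay {f : ℝ → ℝ} (hf : ClassF f) {b : ℝ} (hb : 0 < b) :
    ∃ η C : ℝ, 1 < η ∧ ∀ k ≤ 2, ∀ r, b ≤ r → |iteratedDeriv k f r| * r ^ k ≤ C * r ^ (-η) := by
  choose η hη hO using hf.2
  set η₀ := min (η 0 (by norm_num)) (min (η 1 (by norm_num)) (η 2 (by norm_num)))
  have hη₀ : ∀ k (hk : k ≤ 2), η₀ ≤ η k hk := by
    intro k hk
    interval_cases k <;> simp [η₀]
  have hbound : ∀ k, ∃ C : ℝ, k ≤ 2 → ∀ r, b ≤ r →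
      |iteratedDeriv k f r| * r ^ k ≤ C * r ^ (-η₀) := by
    intro k
    by_cases hk : k ≤ 2
    · obtain ⟨C, hC⟩ := isBigO_principal.1 <| isBigO_iteratedDeriv_mul_pow_principal_Ici hf.1
        (by exact_mod_cast hk) hb (hη₀ k hk) (hO k hk)
      refine ⟨C, fun _ r hr => ?_⟩
      have hr₀ : 0 < r := hb.trans_le hr
      simpa [abs_mul, abs_of_pos hr₀, abs_of_pos (rpow_pos_of_pos hr₀ _)] using hC r hr
    · exact ⟨0, fun h => absurd h hk⟩
  choose C hC using hbound
  obtain ⟨M, hM⟩ := Finset.exists_le ((Finset.range 3).image C)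
  refine ⟨η₀, M, lt_min (hη 0 _) (lt_min (hη 1 _) (hη 2 _)), fun k hk r hr => ?_⟩
  refine (hC k hk r hr).trans (mul_le_mul_of_nonneg_right ?_ (rpow_nonneg (hb.le.trans hr) _))
  exact hM _ (Finset.mem_image_of_mem _ (Finset.mem_range.2 (by omega)))

theorem abs_mul_le_of_decay {d m q L C K η : ℝ} {k : ℕ} (hL : 0 < L) (hLq : L ≤ q) (hη : 0 ≤ η)
    (hd : |d| * q ^ k ≤ C * q ^ (-η)) (hm : |m| ≤ K * q ^ k) :
    |d * m| ≤ K * C * L ^ (-η) := by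
  have hq : 0 < q := hL.trans_le hLq
  have hC : 0 ≤ C :=
    nonneg_of_mul_nonneg_left ((mul_nonneg (abs_nonneg d) (by positivity)).trans hd)
      (rpow_pos_of_pos hq _)
  have hK : 0 ≤ K := nonneg_of_mul_nonneg_left ((abs_nonneg m).trans hm) (by positivity)
  calc |d * m| = |d| * |m| := abs_mul d m
    _ ≤ |d| * (K * q ^ k) := mul_le_mul_of_nonneg_left hm (abs_nonneg d)
    _ = K * (|d| * q ^ k) := by ring
    _ ≤ K * (C * q ^ (-η)) := mul_le_mul_of_nonneg_left hd hK
    _ ≤ K * (C * L ^ (-η)) := mul_le_mul_of_nonneg_left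
          (mul_le_mul_of_nonneg_left (rpow_le_rpow_of_nonpos hL hLq (neg_nonpos.2 hη)) hC) hK
    _ = K * C * L ^ (-η) := by ring

theorem hasDerivAt_deriv_comp_mul {f q q' : ℝ → ℝ} {t a : ℝ} (hf : ContDiffOn ℝ 2 f (Ioi 0))
    (ht : 0 < q t) (hq : HasDerivAt q (q' t) t) (hq' : HasDerivAt q' a t) :
    HasDerivAt (fun t => deriv f (q t) * q' t)
      (deriv (deriv f) (q t) * q' t ^ 2 + deriv f (q t) * a) t := by
  have hf' : HasDerivAt (deriv f) (deriv (deriv f) (q t)) (q t) :=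
    (((hf.deriv_of_isOpen isOpen_Ioi (m := 1) (by norm_num)).contDiffAt
      (Ioi_mem_nhds ht)).differentiableAt (by norm_num)).hasDerivAt
  exact ((hf'.comp t hq).mul hq').congr_deriv (by rw [Function.comp_apply]; ring)

theorem deriv_deriv_tsum_comp {ι : Type*} {f : ℝ → ℝ} {q q' q'' : ι → ℝ → ℝ} {L : ι → ℝ}
    {s : Set ℝ} {t₀ b C K η : ℝ} (hf : ContDiffOn ℝ 2 f (Ioi 0)) (hb : 0 < b) (hη : 0 ≤ η)
    (hdecay : ∀ k ≤ 2, ∀ r, b ≤ r → |iteratedDeriv k f r| * r ^ k ≤ C * r ^ (-η))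
    (hs : IsOpen s) (hs' : IsPreconnected s) (ht₀ : t₀ ∈ s)
    (hq : ∀ i, ∀ t ∈ s, HasDerivAt (q i) (q' i t) t)
    (hq' : ∀ i, ∀ t ∈ s, HasDerivAt (q' i) (q'' i t) t)
    (hq'_le : ∀ i, ∀ t ∈ s, |q' i t| ≤ K * q i t)
    (hq''_le : ∀ i, ∀ t ∈ s, |q'' i t| ≤ K * q i t)
    (hLq : ∀ i, ∀ t ∈ s, L i ≤ q i t) (hbL : ∀ i, b ≤ L i)
    (hL : Summable fun i => L i ^ (-η)) :
    deriv (deriv fun t => ∑' i, f (q i t)) t₀ =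
      ∑' i, deriv (deriv f) (q i t₀) * q' i t₀ ^ 2 + ∑' i, deriv f (q i t₀) * q'' i t₀ := by
  have hL₀ : ∀ i, 0 < L i := fun i => hb.trans_le (hbL i)
  have hbq : ∀ i, ∀ t ∈ s, b ≤ q i t := fun i t ht => (hbL i).trans (hLq i t ht)
  have hg₁ : ∀ i, ∀ t ∈ s, HasDerivAt (fun t => f (q i t)) (deriv f (q i t) * q' i t) t :=
    fun i t ht => ((hf.contDiffAt (Ioi_mem_nhds (hb.trans_le (hbq i t ht)))).differentiableAt
      (by norm_num)).hasDerivAt.comp t (hq i t ht)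
  have hg₂ : ∀ i, ∀ t ∈ s, HasDerivAt (fun t => deriv f (q i t) * q' i t)
      (deriv (deriv f) (q i t) * q' i t ^ 2 + deriv f (q i t) * q'' i t) t := fun i t ht =>
    hasDerivAt_deriv_comp_mul hf (hb.trans_le (hbq i t ht)) (hq i t ht) (hq' i t ht)
  have hbound₀ : ∀ i, |f (q i t₀)| ≤ 1 * C * L i ^ (-η) := fun i => by
    simpa using abs_mul_le_of_decay (k := 0) (m := 1) (K := 1) (hL₀ i) (hLq i t₀ ht₀) hη
      (hdecay 0 (by norm_num) _ (hbq i t₀ ht₀)) (by simp)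
  have hbound₁ : ∀ i, ∀ t ∈ s, |deriv f (q i t) * q' i t| ≤ K * C * L i ^ (-η) :=
    fun i t ht => abs_mul_le_of_decay (k := 1) (hL₀ i) (hLq i t ht) hη
      (by simpa using hdecay 1 (by norm_num) _ (hbq i t ht)) (by simpa using hq'_le i t ht)
  have hbound₂ : ∀ i, ∀ t ∈ s,
      |deriv (deriv f) (q i t) * q' i t ^ 2| ≤ K ^ 2 * C * L i ^ (-η) := fun i t ht => by
    refine abs_mul_le_of_decay (k := 2) (hL₀ i) (hLq i t ht) hη
      (by simpa [iteratedDeriv_succ] using hdecay 2 le_rfl _ (hbq i t ht)) ?_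
    rw [abs_pow, ← mul_pow]
    exact pow_le_pow_left₀ (abs_nonneg _) (hq'_le i t ht) 2
  have hbound₃ : ∀ i, ∀ t ∈ s, |deriv f (q i t) * q'' i t| ≤ K * C * L i ^ (-η) :=
    fun i t ht => abs_mul_le_of_decay (k := 1) (hL₀ i) (hLq i t ht) hη
      (by simpa using hdecay 1 (by norm_num) _ (hbq i t ht)) (by simpa using hq''_le i t ht)
  have hderiv₁ : ∀ t ∈ s, HasDerivAt (fun t => ∑' i, f (q i t))
      (∑' i, deriv f (q i t) * q' i t) t := fun t ht =>
    hasDerivAt_tsum_of_isPreconnected (hL.mul_left (K * C)) hs hs' hg₁ hbound₁ ht₀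
      ((hL.mul_left (1 * C)).of_norm_bounded hbound₀) ht
  have hderiv₂ : HasDerivAt (fun t => ∑' i, deriv f (q i t) * q' i t)
      (∑' i, (deriv (deriv f) (q i t₀) * q' i t₀ ^ 2 + deriv f (q i t₀) * q'' i t₀)) t₀ :=
    hasDerivAt_tsum_of_isPreconnected (hL.mul_left (K ^ 2 * C + K * C)) hs hs' hg₂
      (fun i t ht => (abs_add_le _ _).trans
        ((add_le_add (hbound₂ i t ht) (hbound₃ i t ht)).trans_eq (by ring)))
      ht₀ ((hL.mul_left (K * C)).of_norm_bounded fun i => hbound₁ i t₀ ht₀) ht₀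
  have hderiv_eq : deriv (fun t => ∑' i, f (q i t)) =ᶠ[𝓝 t₀]
      fun t => ∑' i, deriv f (q i t) * q' i t :=
    eventually_of_mem (hs.mem_nhds ht₀) fun t ht => (hderiv₁ t ht).deriv
  rw [hderiv_eq.deriv_eq, hderiv₂.deriv]
  exact Summable.tsum_add ((hL.mul_left (K ^ 2 * C)).of_norm_bounded fun i => hbound₂ i t₀ ht₀)
    ((hL.mul_left (K * C)).of_norm_bounded fun i => hbound₃ i t₀ ht₀)

theorem one_le_sq_add_sq_of_ne_zero {p : ℤ × ℤ} (hp : p ≠ 0) :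
    1 ≤ (p.1 : ℝ) ^ 2 + (p.2 : ℝ) ^ 2 := by
  obtain ⟨m, n⟩ := p
  have hmn : m ≠ 0 ∨ n ≠ 0 := by
    rw [← not_and_or]
    rintro ⟨rfl, rfl⟩
    exact hp rfl
  have : 1 ≤ m ^ 2 + n ^ 2 := by
    rcases hmn with h | h <;>
      nlinarith [sq_nonneg m, sq_nonneg n, Int.one_le_abs h, sq_abs m, sq_abs n]
  exact_mod_cast this

theorem summable_mul_sq_add_sq_rpow_neg {c η : ℝ} (hc : 0 ≤ c) (hη : 1 < η) :
    Summable fun p : {p : ℤ × ℤ // p ≠ 0} => (c * ((p.1.1 : ℝ) ^ 2 + (p.1.2 : ℝ) ^ 2)) ^ (-η) := by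
  have hnorm := (EisensteinSeries.summable_one_div_norm_rpow (by linarith : 2 < 2 * η))
    |>.comp_injective (finTwoArrowEquiv ℤ).symm.injective |>.subtype {p | p ≠ 0} |>.mul_left (c ^ (-η))
  refine hnorm.of_nonneg_of_le (fun p => by positivity) fun ⟨⟨m, n⟩, hp⟩ => ?_
  set v := (finTwoArrowEquiv ℤ).symm (m, n)
  have hv₀ : 0 < ‖v‖ := norm_pos_iff.2 (by simpa [v] using hp)
  have hv : ‖v‖ ^ 2 ≤ (m : ℝ) ^ 2 + (n : ℝ) ^ 2 := by
    have : ‖v‖ = max |(m : ℝ)| |(n : ℝ)| := by simp [v, EisensteinSeries.norm_eq_max_natAbs]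
    rcases max_cases |(m : ℝ)| |(n : ℝ)| with ⟨h, -⟩ | ⟨h, -⟩ <;>
      · rw [this, h, sq_abs]; nlinarith
  calc (c * ((m : ℝ) ^ 2 + (n : ℝ) ^ 2)) ^ (-η) = c ^ (-η) * ((m : ℝ) ^ 2 + (n : ℝ) ^ 2) ^ (-η) :=
        mul_rpow hc (by positivity)
    _ ≤ c ^ (-η) * (‖v‖ ^ 2) ^ (-η) := by
        gcongr c ^ (-η) * ?_
        exact rpow_le_rpow_of_nonpos (by positivity) hv (by linarith)
    _ = c ^ (-η) * ‖v‖ ^ (-(2 * η)) := by rw [← rpow_natCast, ← rpow_mul hv₀.le]; ring_nf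

theorem Qf_y_one (x A : ℝ) (p : ℤ × ℤ) : Qf x 1 A p = A * ((p.1 + x * p.2) ^ 2 + p.2 ^ 2) := by
  simp [Qf]

theorem Qf_x_zero (y A : ℝ) (p : ℤ × ℤ) : Qf 0 y A p = A * (p.1 ^ 2 / y + y * p.2 ^ 2) := by
  simp [Qf]

theorem hasDerivAt_Qf_y_one (A : ℝ) (p : ℤ × ℤ) (x : ℝ) :
    HasDerivAt (fun t => Qf t 1 A p) (2 * A * (p.1 + x * p.2) * p.2) x := by
  simp only [Qf_y_one]
  exact ((((hasDerivAt_id x).mul_const _).const_add _).pow 2 |>.add_const _ |>.const_mul A)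
    |>.congr_deriv (by simp; ring)

theorem hasDerivAt_Qf_x_zero (A : ℝ) (p : ℤ × ℤ) {y : ℝ} (hy : y ≠ 0) :
    HasDerivAt (fun t => Qf 0 t A p) (A * (p.2 ^ 2 - p.1 ^ 2 / y ^ 2)) y := by
  simp only [Qf_x_zero]
  exact (((hasDerivAt_const y _).div (hasDerivAt_id' y) hy).add
    ((hasDerivAt_id' y).mul_const _) |>.const_mul A).congr_deriv (by field_simp; ring)

theorem mul_sq_add_sq_le_Qf_y_one {A x : ℝ} (hA : 0 ≤ A) (hx : |x| ≤ 1 / 2) (p : ℤ × ℤ) :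
    A / 2 * ((p.1 : ℝ) ^ 2 + (p.2 : ℝ) ^ 2) ≤ Qf x 1 A p := by
  have hx' : x ^ 2 ≤ 1 / 4 := by nlinarith [abs_nonneg x, sq_abs x]
  have : (p.1 : ℝ) ^ 2 + p.2 ^ 2 ≤ 2 * ((p.1 + x * p.2) ^ 2 + p.2 ^ 2) := by
    nlinarith [sq_nonneg ((p.1 : ℝ) + 2 * x * p.2),
      mul_nonneg (sq_nonneg (p.2 : ℝ)) (sub_nonneg.2 hx')]
  rw [Qf_y_one]
  nlinarith

theorem mul_sq_add_sq_le_Qf_x_zero {A y : ℝ} (hA : 0 ≤ A) (hy₁ : 1 / 2 ≤ y) (hy₂ : y ≤ 2)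
    (p : ℤ × ℤ) : A / 2 * ((p.1 : ℝ) ^ 2 + (p.2 : ℝ) ^ 2) ≤ Qf 0 y A p := by
  have hy : 0 < y := by linarith
  rw [Qf_x_zero, div_mul_eq_mul_div, mul_div_assoc]
  refine mul_le_mul_of_nonneg_left ?_ hA
  rw [← sub_nonneg]
  field_simp
  nlinarith [mul_nonneg (sq_nonneg (p.1 : ℝ)) hy.le, mul_nonneg (sq_nonneg (p.2 : ℝ)) hy.le,
    mul_nonneg (mul_nonneg (sq_nonneg (p.2 : ℝ)) hy.le) hy.le]

theorem abs_deriv_Qf_y_one_le {A : ℝ} (hA : 0 ≤ A) (p : ℤ × ℤ) (x : ℝ) :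
    |2 * A * (p.1 + x * p.2) * p.2| ≤ 2 * Qf x 1 A p := by
  rw [Qf_y_one, abs_le]
  constructor <;> nlinarith [mul_nonneg hA (sq_nonneg ((p.1 : ℝ) + x * p.2 + p.2)),
    mul_nonneg hA (sq_nonneg ((p.1 : ℝ) + x * p.2 - p.2))]

theorem abs_deriv_deriv_Qf_y_one_le {A : ℝ} (hA : 0 ≤ A) (p : ℤ × ℤ) (x : ℝ) :
    |2 * A * (p.2 : ℝ) ^ 2| ≤ 2 * Qf x 1 A p := by
  rw [Qf_y_one, abs_of_nonneg (by positivity)]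
  nlinarith [mul_nonneg hA (sq_nonneg ((p.1 : ℝ) + x * p.2))]

theorem abs_deriv_Qf_x_zero_le {A y : ℝ} (hA : 0 ≤ A) (hy : 1 / 2 ≤ y) (p : ℤ × ℤ) :
    |A * (p.2 ^ 2 - p.1 ^ 2 / y ^ 2)| ≤ 8 * Qf 0 y A p := by
  have hy₀ : 0 < y := by linarith
  rw [Qf_x_zero, abs_mul, abs_of_nonneg hA, mul_left_comm]
  refine mul_le_mul_of_nonneg_left ?_ hA
  rw [abs_le]
  constructor <;> rw [← sub_nonneg] <;> field_simp <;>
    nlinarith [mul_nonneg (sq_nonneg (p.1 : ℝ)) hy₀.le, mul_nonneg (sq_nonneg (p.2 : ℝ)) hy₀.le,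
      mul_nonneg (mul_nonneg (sq_nonneg (p.2 : ℝ)) hy₀.le) hy₀.le]

theorem abs_deriv_deriv_Qf_x_zero_le {A y : ℝ} (hA : 0 ≤ A) (hy : 1 / 2 ≤ y) (p : ℤ × ℤ) :
    |A * (2 * p.1 ^ 2 / y ^ 3)| ≤ 8 * Qf 0 y A p := by
  have hy₀ : 0 < y := by linarith
  rw [Qf_x_zero, abs_mul, abs_of_nonneg hA, mul_left_comm]
  refine mul_le_mul_of_nonneg_left ?_ hA
  rw [abs_of_nonneg (by positivity), ← sub_nonneg]
  field_simp
  nlinarith [mul_nonneg (sq_nonneg (p.1 : ℝ)) hy₀.le, mul_nonneg (sq_nonneg (p.2 : ℝ)) hy₀.le,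
    mul_nonneg (mul_nonneg (sq_nonneg (p.2 : ℝ)) hy₀.le) hy₀.le,
    mul_nonneg (mul_nonneg (sq_nonneg (p.1 : ℝ)) hy₀.le) hy₀.le]

theorem Ef_neg_fst (f : ℝ → ℝ) (x y A : ℝ) : Ef f (-x) y A = Ef f x y A := by
  let e : {p : ℤ × ℤ // p ≠ 0} ≃ {p : ℤ × ℤ // p ≠ 0} :=
    (Equiv.prodCongr (Equiv.neg ℤ) (Equiv.refl ℤ)).subtypeEquiv (by simp [Prod.ext_iff])
  rw [Ef, ← e.tsum_eq]
  refine tsum_congr fun p => congrArg f ?_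
  simp only [e, Qf, Equiv.subtypeEquiv_apply, Equiv.prodCongr_apply, Prod.map_fst, Prod.map_snd,
    Equiv.neg_apply, Equiv.refl_apply, Int.cast_neg]
  ring

theorem deriv_Ef_fst_zero (f : ℝ → ℝ) (y A : ℝ) : deriv (fun x => Ef f x y A) 0 = 0 := by
  have h := deriv_comp_neg (f := fun x => Ef f x y A) (x := 0)
  simp only [Ef_neg_fst, neg_zero] at h
  linarith

theorem deriv_deriv_Ef_fst {f : ℝ → ℝ} (hf : ClassF f) {A : ℝ} (hA : 0 < A) :
    deriv (fun x' => deriv (fun t => Ef f t 1 A) x') 0 =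
      2 * A * (∑' p : {p : ℤ × ℤ // p ≠ 0},
        (p.1.2 : ℝ) ^ 2 * deriv f (A * ((p.1.1 : ℝ) ^ 2 + (p.1.2 : ℝ) ^ 2))) +
      4 * A ^ 2 * (∑' p : {p : ℤ × ℤ // p ≠ 0},
        (p.1.1 : ℝ) ^ 2 * (p.1.2 : ℝ) ^ 2 *
          deriv (deriv f) (A * ((p.1.1 : ℝ) ^ 2 + (p.1.2 : ℝ) ^ 2))) := by
  obtain ⟨η, C, hη, hdecay⟩ := hf.exists_decay (half_pos hA)
  have hq' (p : ℤ × ℤ) (x : ℝ) :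
      HasDerivAt (fun t => 2 * A * (p.1 + t * p.2) * p.2) (2 * A * (p.2 : ℝ) ^ 2) x :=
    ((((hasDerivAt_id x).mul_const _).const_add _).const_mul (2 * A) |>.mul_const _).congr_deriv
      (by simp; ring)
  have key := deriv_deriv_tsum_comp (ι := {p : ℤ × ℤ // p ≠ 0}) (s := Ioo (-(1 / 2)) (1 / 2))
    (t₀ := 0) (K := 2) (q := fun p t => Qf t 1 A p.1)
    (q' := fun p t => 2 * A * (p.1.1 + t * p.1.2) * p.1.2)
    (q'' := fun p _ => 2 * A * (p.1.2 : ℝ) ^ 2)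
    (L := fun p => A / 2 * ((p.1.1 : ℝ) ^ 2 + (p.1.2 : ℝ) ^ 2))
    hf.1 (half_pos hA) (by linarith) hdecay isOpen_Ioo isPreconnected_Ioo ⟨by norm_num, by norm_num⟩
    (fun p t _ => hasDerivAt_Qf_y_one A p.1 t) (fun p t _ => hq' p.1 t)
    (fun p t _ => abs_deriv_Qf_y_one_le hA.le p.1 t)
    (fun p t _ => abs_deriv_deriv_Qf_y_one_le hA.le p.1 t)
    (fun p t ht => mul_sq_add_sq_le_Qf_y_one hA.le (abs_le.2 ⟨ht.1.le, ht.2.le⟩) p.1)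
    (fun p => le_mul_of_one_le_right (half_pos hA).le (one_le_sq_add_sq_of_ne_zero p.2))
    (summable_mul_sq_add_sq_rpow_neg (half_pos hA).le hη)
  change deriv (deriv fun t => ∑' p : {p : ℤ × ℤ // p ≠ 0}, f (Qf t 1 A p.1)) 0 = _
  rw [key, add_comm, ← tsum_mul_left, ← tsum_mul_left]
  congr 1 <;> exact tsum_congr fun p => by simp only [Qf_y_one, zero_mul, add_zero]; ring

theorem deriv_deriv_Ef_snd {f : ℝ → ℝ} (hf : ClassF f) {A : ℝ} (hA : 0 < A) :
    deriv (fun y' => deriv (fun t => Ef f 0 t A) y') 1 =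
      2 * A * (∑' p : {p : ℤ × ℤ // p ≠ 0},
        (p.1.1 : ℝ) ^ 2 * deriv f (A * ((p.1.1 : ℝ) ^ 2 + (p.1.2 : ℝ) ^ 2))) +
      A ^ 2 * (∑' p : {p : ℤ × ℤ // p ≠ 0},
        ((p.1.2 : ℝ) ^ 2 - (p.1.1 : ℝ) ^ 2) ^ 2 *
          deriv (deriv f) (A * ((p.1.1 : ℝ) ^ 2 + (p.1.2 : ℝ) ^ 2))) := by
  obtain ⟨η, C, hη, hdecay⟩ := hf.exists_decay (half_pos hA)
  have hq' (p : ℤ × ℤ) {y : ℝ} (hy : 0 < y) : HasDerivAt (fun t => A * (p.2 ^ 2 - p.1 ^ 2 / t ^ 2))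
      (A * (2 * p.1 ^ 2 / y ^ 3)) y :=
    (((hasDerivAt_const y _).sub ((hasDerivAt_const y _).div (hasDerivAt_pow 2 y)
      (pow_pos hy 2).ne')).const_mul A).congr_deriv (by simp; field_simp)
  have hy₀ : ∀ y ∈ Ioo (1 / 2 : ℝ) 2, 0 < y := fun y hy => by linarith [hy.1]
  have key := deriv_deriv_tsum_comp (ι := {p : ℤ × ℤ // p ≠ 0}) (s := Ioo (1 / 2) 2) (t₀ := 1)
    (K := 8) (q := fun p t => Qf 0 t A p.1) (q' := fun p t => A * (p.1.2 ^ 2 - p.1.1 ^ 2 / t ^ 2))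
    (q'' := fun p t => A * (2 * p.1.1 ^ 2 / t ^ 3))
    (L := fun p => A / 2 * ((p.1.1 : ℝ) ^ 2 + (p.1.2 : ℝ) ^ 2))
    hf.1 (half_pos hA) (by linarith) hdecay isOpen_Ioo isPreconnected_Ioo ⟨by norm_num, by norm_num⟩
    (fun p t ht => hasDerivAt_Qf_x_zero A p.1 (hy₀ t ht).ne') (fun p t ht => hq' p.1 (hy₀ t ht))
    (fun p t ht => abs_deriv_Qf_x_zero_le hA.le ht.1.le p.1)
    (fun p t ht => abs_deriv_deriv_Qf_x_zero_le hA.le ht.1.le p.1)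
    (fun p t ht => mul_sq_add_sq_le_Qf_x_zero hA.le ht.1.le ht.2.le p.1)
    (fun p => le_mul_of_one_le_right (half_pos hA).le (one_le_sq_add_sq_of_ne_zero p.2))
    (summable_mul_sq_add_sq_rpow_neg (half_pos hA).le hη)
  change deriv (deriv fun t => ∑' p : {p : ℤ × ℤ // p ≠ 0}, f (Qf 0 t A p.1)) 1 = _
  rw [key, add_comm, ← tsum_mul_left, ← tsum_mul_left]
  congr 1 <;> exact tsum_congr fun p => by simp only [Qf_x_zero, div_one, one_mul, one_pow]; ring

/-- Second derivatives of `(x,y) ↦ E_f(x,y,A)` at the square point `(0,1)`: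
explicit formulas for `∂²ₓₓ` and `∂²ᵧᵧ`, and vanishing of the mixed derivative, so that
the Hessian of `E_f(·,·,A)` at `(0,1)` is diagonal. -/
theorem hessian_at_square (f : ℝ → ℝ) (hf : ClassF f) (A : ℝ) (hA : 0 < A) :
    (deriv (fun x' => deriv (fun t => Ef f t 1 A) x') 0 =
      2 * A * (∑' p : {p : ℤ × ℤ // p ≠ 0},
        (p.1.2 : ℝ) ^ 2 * deriv f (A * ((p.1.1 : ℝ) ^ 2 + (p.1.2 : ℝ) ^ 2))) +
      4 * A ^ 2 * (∑' p : {p : ℤ × ℤ // p ≠ 0},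
        (p.1.1 : ℝ) ^ 2 * (p.1.2 : ℝ) ^ 2 *
          deriv (deriv f) (A * ((p.1.1 : ℝ) ^ 2 + (p.1.2 : ℝ) ^ 2)))) ∧
    (deriv (fun y' => deriv (fun t => Ef f 0 t A) y') 1 =
      2 * A * (∑' p : {p : ℤ × ℤ // p ≠ 0},
        (p.1.1 : ℝ) ^ 2 * deriv f (A * ((p.1.1 : ℝ) ^ 2 + (p.1.2 : ℝ) ^ 2))) +
      A ^ 2 * (∑' p : {p : ℤ × ℤ // p ≠ 0},
        ((p.1.2 : ℝ) ^ 2 - (p.1.1 : ℝ) ^ 2) ^ 2 *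
          deriv (deriv f) (A * ((p.1.1 : ℝ) ^ 2 + (p.1.2 : ℝ) ^ 2)))) ∧
    deriv (fun y' => deriv (fun t => Ef f t y' A) 0) 1 = 0 :=
  ⟨deriv_deriv_Ef_fst hf hA, deriv_deriv_Ef_snd hf hA,
    by simp only [deriv_Ef_fst_zero, deriv_const]⟩
end
end

section
/- For every real s > 1, the identity ∑_{(m,n)∈ℤ²∖{(0,0)}} m²/(m²+mn+n²)^{s+1} = ∑_{(m,n)∈ℤ²∖{(0,0)}} m⁴/(m²+mn+n²)^{s+2} holds; equivalently, ∑ m²/(m²+mn+n²)^{s+1} = S₁(s+2). -/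
open Real

noncomputable section

namespace TriAux

def Q (p : ℤ × ℤ) : ℝ := (p.1 : ℝ) ^ 2 + (p.1 : ℝ) * (p.2 : ℝ) + (p.2 : ℝ) ^ 2

lemma two_Q (p : ℤ × ℤ) :
    2 * Q p = (p.1 : ℝ) ^ 2 + (p.2 : ℝ) ^ 2 + ((p.1 : ℝ) + (p.2 : ℝ)) ^ 2 := by
  unfold Q; ring

lemma Q_pos {p : ℤ × ℤ} (hp : p ≠ 0) : 0 < Q p := by
  have hm : ¬(p.1 = 0 ∧ p.2 = 0) := fun h => hp (Prod.ext h.1 h.2)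
  unfold Q
  rcases not_and_or.mp hm with h | h
  · have h' : (p.1 : ℝ) ≠ 0 := Int.cast_ne_zero.mpr h
    nlinarith [sq_nonneg ((p.1 : ℝ) + p.2), sq_nonneg (p.2 : ℝ), sq_pos_of_ne_zero h']
  · have h' : (p.2 : ℝ) ≠ 0 := Int.cast_ne_zero.mpr h
    nlinarith [sq_nonneg ((p.1 : ℝ) + p.2), sq_nonneg (p.1 : ℝ), sq_pos_of_ne_zero h']

/-- swap equiv -/
def e₁ : {p : ℤ × ℤ // p ≠ 0} ≃ {p : ℤ × ℤ // p ≠ 0} :=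
  (Equiv.prodComm ℤ ℤ).subtypeEquiv (by
    rintro ⟨m, n⟩
    simp [Prod.ext_iff, and_comm])

lemma e₁_apply (p : {p : ℤ × ℤ // p ≠ 0}) : (e₁ p : ℤ × ℤ) = (p.1.2, p.1.1) := rfl

def τ : ℤ × ℤ → ℤ × ℤ := fun p => (p.1 + p.2, -p.2)

lemma τ_inv : Function.Involutive τ := by
  rintro ⟨m, n⟩; simp [τ]

/-- (m,n) ↦ (m+n, -n) equiv -/
def e₂ : {p : ℤ × ℤ // p ≠ 0} ≃ {p : ℤ × ℤ // p ≠ 0} :=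
  (τ_inv.toPerm).subtypeEquiv (by
    rintro ⟨m, n⟩
    refine not_congr ?_
    rw [show (τ_inv.toPerm) (m, n) = (m + n, -n) from rfl]
    simp only [Prod.ext_iff, Prod.fst_zero, Prod.snd_zero]
    omega)

lemma e₂_apply (p : {p : ℤ × ℤ // p ≠ 0}) :
    (e₂ p : ℤ × ℤ) = (p.1.1 + p.1.2, -p.1.2) := by
  simp [e₂, Equiv.subtypeEquiv, Function.Involutive.toPerm, τ]

lemma Q_swap (a b : ℤ) : Q (b, a) = Q (a, b) := by unfold Q; push_cast; ring

lemma Q_tau (a b : ℤ) : Q (a + b, -b) = Q (a, b) := by unfold Q; push_cast; ring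

lemma Q_e₁ (p : {p : ℤ × ℤ // p ≠ 0}) : Q (e₁ p) = Q p.1 := by
  rw [e₁_apply]; unfold Q; push_cast; ring

lemma Q_e₂ (p : {p : ℤ × ℤ // p ≠ 0}) : Q (e₂ p) = Q p.1 := by
  rw [e₂_apply]; unfold Q; push_cast; ring

/-- base summability -/
lemma summable_Q (s : ℝ) (hs : 1 < s) :
    Summable fun p : {p : ℤ × ℤ // p ≠ 0} => Q p.1 ^ (-s) := by
  have hk : (2 : ℝ) < 2 * s := by linarith
  have h0 := EisensteinSeries.summable_one_div_norm_rpow hk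
  have h1 : Summable fun p : ℤ × ℤ => ‖(![p.1, p.2] : Fin 2 → ℤ)‖ ^ (-(2 * s)) := by
    have := (finTwoArrowEquiv ℤ).symm.summable_iff.mpr h0
    refine this.congr fun p => ?_
    simp [finTwoArrowEquiv]
  have h2 := (h1.subtype {p : ℤ × ℤ | p ≠ 0}).mul_left ((2 : ℝ) ^ s)
  refine Summable.of_nonneg_of_le (fun p => Real.rpow_nonneg (Q_pos p.2).le _)
    (fun p => ?_) h2
  set N : ℝ := ‖(![p.1.1, p.1.2] : Fin 2 → ℤ)‖ with hN
  have hNpos : 0 < N := by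
    rw [hN, norm_pos_iff]
    intro hc
    apply p.2
    have h0' : p.1.1 = 0 := by simpa using congrFun hc 0
    have h1' : p.1.2 = 0 := by simpa using congrFun hc 1
    exact Prod.ext h0' h1'
  have hm : ((p.1.1.natAbs : ℝ)) ^ 2 = (p.1.1 : ℝ) ^ 2 := by
    rw [Nat.cast_natAbs]; push_cast; rw [sq_abs]
  have hn : ((p.1.2.natAbs : ℝ)) ^ 2 = (p.1.2 : ℝ) ^ 2 := by
    rw [Nat.cast_natAbs]; push_cast; rw [sq_abs]
  have hle : N ^ 2 ≤ 2 * Q p.1 := by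
    rw [two_Q, hN, EisensteinSeries.norm_eq_max_natAbs]
    simp only [Matrix.cons_val_zero, Matrix.cons_val_one, Matrix.head_cons]
    push_cast [Nat.cast_max]
    rcases max_choice ((p.1.1.natAbs : ℝ)) ((p.1.2.natAbs : ℝ)) with h | h <;> rw [h] <;>
      [rw [hm]; rw [hn]] <;>
      nlinarith [sq_nonneg ((p.1.1 : ℝ) + p.1.2), sq_nonneg (p.1.1 : ℝ), sq_nonneg (p.1.2 : ℝ)]
  have key : Q p.1 ^ (-s) ≤ (N ^ 2 / 2) ^ (-s) := by
    apply Real.rpow_le_rpow_of_nonpos (by positivity) (by linarith) (by linarith)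
  have heq : (N ^ 2 / 2) ^ (-s) = 2 ^ s * N ^ (-(2 * s)) := by
    rw [Real.div_rpow (by positivity) (by norm_num)]
    rw [← Real.rpow_natCast N 2, ← Real.rpow_mul hNpos.le]
    have he : ((2 : ℕ) : ℝ) * -s = -(2 * s) := by push_cast; ring
    rw [he, Real.rpow_neg (by norm_num : (0:ℝ) ≤ 2) s, div_eq_mul_inv, inv_inv, mul_comm]
  calc Q p.1 ^ (-s) ≤ (N ^ 2 / 2) ^ (-s) := key
    _ = 2 ^ s * N ^ (-(2 * s)) := heq

end TriAux

namespace TriAux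

lemma quad_term (s : ℝ) (p : {p : ℤ × ℤ // p ≠ 0}) :
    ((p.1.1 : ℝ) ^ 2 + (p.1.2 : ℝ) ^ 2 + ((p.1.1 : ℝ) + (p.1.2 : ℝ)) ^ 2) / Q p.1 ^ (s + 1)
      = 2 * Q p.1 ^ (-s) := by
  have hQ := Q_pos p.2
  rw [← two_Q, mul_div_assoc]
  congr 1
  rw [show (-s) = 1 - (s + 1) by ring, Real.rpow_sub hQ, Real.rpow_one]

lemma quart_term (s : ℝ) (p : {p : ℤ × ℤ // p ≠ 0}) :
    ((p.1.1 : ℝ) ^ 4 + (p.1.2 : ℝ) ^ 4 + ((p.1.1 : ℝ) + (p.1.2 : ℝ)) ^ 4) / Q p.1 ^ (s + 2)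
      = 2 * Q p.1 ^ (-s) := by
  have hQ := Q_pos p.2
  have hnum : (p.1.1 : ℝ) ^ 4 + (p.1.2 : ℝ) ^ 4 + ((p.1.1 : ℝ) + (p.1.2 : ℝ)) ^ 4
      = 2 * Q p.1 ^ (2 : ℕ) := by
    unfold Q; ring
  rw [hnum, mul_div_assoc]
  congr 1
  rw [← Real.rpow_natCast (Q p.1) 2, ← Real.rpow_sub hQ]
  congr 1
  push_cast; ring

lemma summable_g2 (s : ℝ) (hs : 1 < s) :
    Summable fun p : {p : ℤ × ℤ // p ≠ 0} => (p.1.1 : ℝ) ^ 2 / Q p.1 ^ (s + 1) := by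
  refine Summable.of_nonneg_of_le
    (fun p => div_nonneg (sq_nonneg _) (Real.rpow_nonneg (Q_pos p.2).le _))
    (fun p => ?_) ((summable_Q s hs).mul_left 2)
  have hQ := Q_pos p.2
  have hD : (0 : ℝ) < Q p.1 ^ (s + 1) := Real.rpow_pos_of_pos hQ _
  have hle : (p.1.1 : ℝ) ^ 2 ≤ 2 * Q p.1 := by
    rw [two_Q]; nlinarith [sq_nonneg (p.1.2 : ℝ), sq_nonneg ((p.1.1 : ℝ) + (p.1.2 : ℝ))]
  calc (p.1.1 : ℝ) ^ 2 / Q p.1 ^ (s + 1) ≤ 2 * Q p.1 / Q p.1 ^ (s + 1) :=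
        (div_le_div_iff_of_pos_right hD).mpr hle
    _ = 2 * Q p.1 ^ (-s) := by
        rw [mul_div_assoc]
        congr 1
        rw [show (-s) = 1 - (s + 1) by ring, Real.rpow_sub hQ, Real.rpow_one]

lemma summable_g4 (s : ℝ) (hs : 1 < s) :
    Summable fun p : {p : ℤ × ℤ // p ≠ 0} => (p.1.1 : ℝ) ^ 4 / Q p.1 ^ (s + 2) := by
  refine Summable.of_nonneg_of_le
    (fun p => div_nonneg (by positivity) (Real.rpow_nonneg (Q_pos p.2).le _))
    (fun p => ?_) ((summable_Q s hs).mul_left 2)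
  have hQ := Q_pos p.2
  have hD : (0 : ℝ) < Q p.1 ^ (s + 2) := Real.rpow_pos_of_pos hQ _
  have hle : (p.1.1 : ℝ) ^ 4 ≤ 2 * Q p.1 ^ (2 : ℕ) := by
    unfold Q; nlinarith [sq_nonneg (p.1.2 : ℝ), sq_nonneg ((p.1.1 : ℝ) + (p.1.2 : ℝ)),
      sq_nonneg ((p.1.1 : ℝ) * (p.1.1 : ℝ) + (p.1.1 : ℝ) * (p.1.2 : ℝ)),
      sq_nonneg ((p.1.1 : ℝ) ^ 2 + (p.1.1 : ℝ) * (p.1.2 : ℝ) + (p.1.2 : ℝ) ^ 2),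
      sq_nonneg ((p.1.1 : ℝ) ^ 2 - (p.1.2 : ℝ) ^ 2)]
  calc (p.1.1 : ℝ) ^ 4 / Q p.1 ^ (s + 2) ≤ 2 * Q p.1 ^ (2 : ℕ) / Q p.1 ^ (s + 2) :=
        (div_le_div_iff_of_pos_right hD).mpr hle
    _ = 2 * Q p.1 ^ (-s) := by
        rw [mul_div_assoc]
        congr 1
        rw [← Real.rpow_natCast (Q p.1) 2, ← Real.rpow_sub hQ]
        congr 1
        push_cast; ring

set_option maxHeartbeats 1000000 in
lemma quad_tsum (s : ℝ) (hs : 1 < s) :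
    (∑' p : {p : ℤ × ℤ // p ≠ 0}, (p.1.1 : ℝ) ^ 2 / Q p.1 ^ (s + 1))
      = 2 / 3 * ∑' p : {p : ℤ × ℤ // p ≠ 0}, Q p.1 ^ (-s) := by
  set g : {p : ℤ × ℤ // p ≠ 0} → ℝ := fun p => (p.1.1 : ℝ) ^ 2 / Q p.1 ^ (s + 1) with hgdef
  have hg : Summable g := summable_g2 s hs
  have hg1 : Summable fun p => g (e₁ p) := e₁.summable_iff.mpr hg
  have hg2 : Summable fun p => g (e₂ p) := e₂.summable_iff.mpr hg
  have hterm : ∀ p : {p : ℤ × ℤ // p ≠ 0},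
      g p + (g (e₁ p) + g (e₂ p)) = 2 * Q p.1 ^ (-s) := by
    intro p
    have h1 : g (e₁ p) = (p.1.2 : ℝ) ^ 2 / Q p.1 ^ (s + 1) := by
      simp only [hgdef, e₁_apply, Q_swap]
    have h2 : g (e₂ p) = ((p.1.1 : ℝ) + (p.1.2 : ℝ)) ^ 2 / Q p.1 ^ (s + 1) := by
      simp only [hgdef, e₂_apply, Q_tau]
      push_cast
      ring
    have h3 := quad_term s p
    rw [add_div, add_div] at h3
    rw [h1, h2, hgdef]
    linarith
  have hsum : (∑' p, (g p + (g (e₁ p) + g (e₂ p))))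
      = (∑' p, g p) + ((∑' p, g (e₁ p)) + (∑' p, g (e₂ p))) := by
    rw [Summable.tsum_add hg (hg1.add hg2), Summable.tsum_add hg1 hg2]
  rw [tsum_congr hterm, tsum_mul_left, e₁.tsum_eq g, e₂.tsum_eq g] at hsum
  linarith

set_option maxHeartbeats 1000000 in
lemma quart_tsum (s : ℝ) (hs : 1 < s) :
    (∑' p : {p : ℤ × ℤ // p ≠ 0}, (p.1.1 : ℝ) ^ 4 / Q p.1 ^ (s + 2))
      = 2 / 3 * ∑' p : {p : ℤ × ℤ // p ≠ 0}, Q p.1 ^ (-s) := by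
  set g : {p : ℤ × ℤ // p ≠ 0} → ℝ := fun p => (p.1.1 : ℝ) ^ 4 / Q p.1 ^ (s + 2) with hgdef
  have hg : Summable g := summable_g4 s hs
  have hg1 : Summable fun p => g (e₁ p) := e₁.summable_iff.mpr hg
  have hg2 : Summable fun p => g (e₂ p) := e₂.summable_iff.mpr hg
  have hterm : ∀ p : {p : ℤ × ℤ // p ≠ 0},
      g p + (g (e₁ p) + g (e₂ p)) = 2 * Q p.1 ^ (-s) := by
    intro p
    have h1 : g (e₁ p) = (p.1.2 : ℝ) ^ 4 / Q p.1 ^ (s + 2) := by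
      simp only [hgdef, e₁_apply, Q_swap]
    have h2 : g (e₂ p) = ((p.1.1 : ℝ) + (p.1.2 : ℝ)) ^ 4 / Q p.1 ^ (s + 2) := by
      simp only [hgdef, e₂_apply, Q_tau]
      push_cast
      ring
    have h3 := quart_term s p
    rw [add_div, add_div] at h3
    rw [h1, h2, hgdef]
    linarith
  have hsum : (∑' p, (g p + (g (e₁ p) + g (e₂ p))))
      = (∑' p, g p) + ((∑' p, g (e₁ p)) + (∑' p, g (e₂ p))) := by
    rw [Summable.tsum_add hg (hg1.add hg2), Summable.tsum_add hg1 hg2]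
  rw [tsum_congr hterm, tsum_mul_left, e₁.tsum_eq g, e₂.tsum_eq g] at hsum
  linarith

end TriAux

/-- For `s > 1`, `∑ m²/(m²+mn+n²)^{s+1} = ∑ m⁴/(m²+mn+n²)^{s+2}`, i.e. the left-hand sum
equals `S₁(s+2)`. -/
theorem triangular_sum_identity (s : ℝ) (hs : 1 < s) :
    (∑' p : {p : ℤ × ℤ // p ≠ 0},
      (p.1.1 : ℝ) ^ 2 /
        ((p.1.1 : ℝ) ^ 2 + (p.1.1 : ℝ) * (p.1.2 : ℝ) + (p.1.2 : ℝ) ^ 2) ^ (s + 1)) =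
    ∑' p : {p : ℤ × ℤ // p ≠ 0},
      (p.1.1 : ℝ) ^ 4 /
        ((p.1.1 : ℝ) ^ 2 + (p.1.1 : ℝ) * (p.1.2 : ℝ) + (p.1.2 : ℝ) ^ 2) ^ (s + 2) := by
  have h2 := TriAux.quad_tsum s hs
  have h4 := TriAux.quart_tsum s hs
  unfold TriAux.Q at h2 h4
  exact h2.trans h4.symm
end
end
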